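/- Let (A, μ, Δ, α, c) be a Hom-bialgebra with weak unit c over a field of characteristic 0, and let R = Σ sᵢ ⊗ tᵢ ∈ A ⊗ A. Define λ₂ : A* → A by λ₂(φ) = Σ α(sᵢ) φ(tᵢ) and λ₂' : A* → A by λ₂'(φ) = Σ sᵢ φ(α(tᵢ)). Then the axiom (α ⊗ Δ)(R) = R₁₃R₁₂ holds if and only if λ₂ ∘ Δ* = μ ∘ τ ∘ (λ₂' ⊗ λ₂') : A* ⊗ A* → A. -/

import Mathlib

/-!
Both sides of the axiom live in `(A ⊗ A) ⊗ A`. Slicing the third and then the second tensor factor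
with functionals `ψ` and `φ` turns `(α ⊗ Δ)(R)` into `λ₂(Δ*(φ, ψ))`, and, since `c` is a weak unit,
`R₁₃R₁₂ = Σ sⱼsᵢ ⊗ α(tᵢ) ⊗ α(tⱼ)` into `μ(λ₂'(ψ), λ₂'(φ))`. Over a field these slices separate the
points of `(A ⊗ A) ⊗ A`, so the two conditions are equivalent.
-/

open TensorProduct

variable {k : Type*} [Field k] [CharZero k] {A : Type*} [AddCommGroup A] [Module k A]

noncomputable def mulT2 (μ : A →ₗ[k] A →ₗ[k] A) (X Y : A ⊗[k] A) : A ⊗[k] A :=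
  ((TensorProduct.map (TensorProduct.lift μ) (TensorProduct.lift μ)) ∘ₗ
    (TensorProduct.tensorTensorTensorComm k A A A A).toLinearMap) (X ⊗ₜ[k] Y)

noncomputable def mulT3 (μ : A →ₗ[k] A →ₗ[k] A) (X Y : (A ⊗[k] A) ⊗[k] A) :
    (A ⊗[k] A) ⊗[k] A :=
  ((TensorProduct.map
      ((TensorProduct.map (TensorProduct.lift μ) (TensorProduct.lift μ)) ∘ₗ
        (TensorProduct.tensorTensorTensorComm k A A A A).toLinearMap)
      (TensorProduct.lift μ)) ∘ₗ
    (TensorProduct.tensorTensorTensorComm k (A ⊗[k] A) A (A ⊗[k] A) A).toLinearMap)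
    (X ⊗ₜ[k] Y)

noncomputable def R12e (c : A) (R : A ⊗[k] A) : (A ⊗[k] A) ⊗[k] A := R ⊗ₜ[k] c

noncomputable def R23e (c : A) (R : A ⊗[k] A) : (A ⊗[k] A) ⊗[k] A :=
  (TensorProduct.assoc k A A A).symm (c ⊗ₜ[k] R)

noncomputable def R13e (c : A) (R : A ⊗[k] A) : (A ⊗[k] A) ⊗[k] A :=
  TensorProduct.map (TensorProduct.comm k A A).toLinearMap LinearMap.id (R23e c R)

/-- The dual multiplication `Δ*` on `A*`: `⟨Δ*(φ, ψ), x⟩ = ⟨φ ⊗ ψ, Δ(x)⟩`. -/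
noncomputable def dualMul (Δ : A →ₗ[k] A ⊗[k] A) (φ ψ : Module.Dual k A) :
    Module.Dual k A :=
  LinearMap.mul' k k ∘ₗ TensorProduct.map φ ψ ∘ₗ Δ

/-- `λ₂(φ) = Σ α(sᵢ) φ(tᵢ)` for `R = Σ sᵢ ⊗ tᵢ`. -/
noncomputable def lam2 (α : A →ₗ[k] A) (R : A ⊗[k] A) (φ : Module.Dual k A) : A :=
  (TensorProduct.rid k A) (TensorProduct.map α φ R)

/-- `λ₂'(φ) = Σ sᵢ φ(α(tᵢ))` for `R = Σ sᵢ ⊗ tᵢ`. -/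
noncomputable def lam2' (α : A →ₗ[k] A) (R : A ⊗[k] A) (φ : Module.Dual k A) : A :=
  (TensorProduct.rid k A) (TensorProduct.map LinearMap.id (φ ∘ₗ α) R)

section SliceMaps

variable {S M V : Type*} [CommSemiring S] [AddCommMonoid M] [Module S M] [AddCommMonoid V] [Module S V]

variable (V) in
noncomputable def sliceRight (φ : Module.Dual S M) : V ⊗[S] M →ₗ[S] V :=
  TensorProduct.rid S V ∘ₗ φ.lTensor V

@[simp]
theorem sliceRight_tmul (φ : Module.Dual S M) (v : V) (m : M) :
    sliceRight V φ (v ⊗ₜ m) = φ m • v :=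
  rfl

theorem sliceRight_map {N W : Type*} [AddCommMonoid N] [Module S N] [AddCommMonoid W]
    [Module S W]
    (f : V →ₗ[S] W) (g : N →ₗ[S] M) (φ : Module.Dual S M) (X : V ⊗[S] N) :
    sliceRight W φ (TensorProduct.map f g X) = f (sliceRight V (φ ∘ₗ g) X) := by
  induction X using TensorProduct.induction_on with
  | zero => simp
  | tmul v m => simp
  | add X Y hX hY => simp [hX, hY]

theorem sliceRight_sliceRight_assoc_symm (φ ψ : Module.Dual S M) (X : V ⊗[S] (M ⊗[S] M)) :
    sliceRight V φ (sliceRight (V ⊗[S] M) ψ ((TensorProduct.assoc S V M M).symm X)) =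
      sliceRight V (LinearMap.mul' S S ∘ₗ TensorProduct.map φ ψ) X := by
  induction X using TensorProduct.induction_on with
  | zero => simp
  | tmul v D =>
    induction D using TensorProduct.induction_on with
    | zero => simp
    | tmul m n => simp [smul_smul, mul_comm]
    | add D E hD hE => simp_all [tmul_add]
  | add X Y hX hY => simp [hX, hY]

theorem eq_of_forall_sliceRight_eq [Module.Free S M] {X Y : V ⊗[S] M}
    (h : ∀ φ : Module.Dual S M, sliceRight V φ X = sliceRight V φ Y) : X = Y := by
  classical
  let b := Module.Free.chooseBasis S M
  have coord_eq (i) :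
      Finsupp.lapply i ∘ₗ (TensorProduct.equivFinsuppOfBasisRight (M := V) b).toLinearMap =
        sliceRight V (b.coord i) := by
    ext v m
    simp
  refine (TensorProduct.equivFinsuppOfBasisRight b).injective (Finsupp.ext fun i => ?_)
  simpa only [← coord_eq i, LinearMap.comp_apply, LinearEquiv.coe_coe, Finsupp.lapply_apply]
    using h (b.coord i)

theorem eq_iff_forall_sliceRight_sliceRight_eq [Module.Free S M] {X Y : (V ⊗[S] M) ⊗[S] M} :
    X = Y ↔ ∀ φ ψ : Module.Dual S M,
      sliceRight V φ (sliceRight (V ⊗[S] M) ψ X) = sliceRight V φ (sliceRight (V ⊗[S] M) ψ Y) :=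
  ⟨fun h _ _ => h ▸ rfl, fun h =>
    eq_of_forall_sliceRight_eq fun ψ => eq_of_forall_sliceRight_eq fun φ => h φ ψ⟩

end SliceMaps

section

variable {K H : Type*} [Field K] [AddCommGroup H] [Module K H]

theorem lam2_eq_sliceRight (α : H →ₗ[K] H) (R : H ⊗[K] H) (φ : Module.Dual K H) :
    lam2 α R φ = α (sliceRight H φ R) := by
  induction R using TensorProduct.induction_on <;> simp_all [lam2]

theorem lam2_dualMul_eq_sliceRight_sliceRight (Δ : H →ₗ[K] H ⊗[K] H) (α : H →ₗ[K] H)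
    (R : H ⊗[K] H) (φ ψ : Module.Dual K H) :
    lam2 α R (dualMul Δ φ ψ) = sliceRight H φ (sliceRight (H ⊗[K] H) ψ
      ((TensorProduct.assoc K H H H).symm (TensorProduct.map α Δ R))) := by
  rw [sliceRight_sliceRight_assoc_symm, sliceRight_map, lam2_eq_sliceRight]
  rfl

theorem mulT3_R13e_R12e_tmul (μ : H →ₗ[K] H →ₗ[K] H) (α : H →ₗ[K] H) (c : H)
    (hcl : ∀ x, μ c x = α x) (hcr : ∀ x, μ x c = α x) (s t s' t' : H) :
    mulT3 μ (R13e c (s ⊗ₜ t)) (R12e c (s' ⊗ₜ t')) = (μ s s' ⊗ₜ α t') ⊗ₜ α t := by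
  simp [mulT3, R13e, R23e, R12e, hcl, hcr]

theorem mul_lam2'_eq_sliceRight_sliceRight (μ : H →ₗ[K] H →ₗ[K] H) (α : H →ₗ[K] H) (c : H)
    (hcl : ∀ x, μ c x = α x) (hcr : ∀ x, μ x c = α x) (R₁ R₂ : H ⊗[K] H) (φ ψ : Module.Dual K H) :
    μ (lam2' α R₁ ψ) (lam2' α R₂ φ) =
      sliceRight H φ (sliceRight (H ⊗[K] H) ψ (mulT3 μ (R13e c R₁) (R12e c R₂))) := by
  induction R₁ using TensorProduct.induction_on with
  | zero => simp [lam2', R13e, R23e, mulT3]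
  | tmul s t =>
    induction R₂ using TensorProduct.induction_on with
    | zero => simp [lam2', R12e, mulT3]
    | tmul s' t' => simp [lam2', mulT3_R13e_R12e_tmul μ α c hcl hcr, smul_smul, mul_comm]
    | add X Y hX hY => simp_all [lam2', R12e, mulT3, add_tmul, tmul_add]
  | add X Y hX hY => simp_all [lam2', R13e, R23e, mulT3, tmul_add, add_tmul]

end

theorem second_axiom_iff_lambda_two_general
    (μ : A →ₗ[k] A →ₗ[k] A) (Δ : A →ₗ[k] A ⊗[k] A) (α : A →ₗ[k] A) (c : A) (R : A ⊗[k] A)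
    (hcl : ∀ x : A, μ c x = α x) (hcr : ∀ x : A, μ x c = α x) :
    ((TensorProduct.assoc k A A A).symm (TensorProduct.map α Δ R)
        = mulT3 μ (R13e c R) (R12e c R)) ↔
    (∀ φ ψ : Module.Dual k A,
      lam2 α R (dualMul Δ φ ψ) = μ (lam2' α R ψ) (lam2' α R φ)) := by
  rw [eq_iff_forall_sliceRight_sliceRight_eq]
  refine forall₂_congr fun φ ψ => ?_
  rw [lam2_dualMul_eq_sliceRight_sliceRight, mul_lam2'_eq_sliceRight_sliceRight μ α c hcl hcr]

/-- The axiom `(α ⊗ Δ)(R) = R₁₃R₁₂` holds if and only if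
`λ₂ ∘ Δ* = μ ∘ τ ∘ (λ₂' ⊗ λ₂')`. -/
theorem second_axiom_iff_lambda_two
    (μ : A →ₗ[k] A →ₗ[k] A) (Δ : A →ₗ[k] A ⊗[k] A) (α : A →ₗ[k] A) (c : A) (R : A ⊗[k] A)
    (hαμ : ∀ x y : A, α (μ x y) = μ (α x) (α y))
    (hassoc : ∀ x y z : A, μ (μ x y) (α z) = μ (α x) (μ y z))
    (hαΔ : Δ ∘ₗ α = TensorProduct.map α α ∘ₗ Δ)
    (hcoassoc : (TensorProduct.assoc k A A A).toLinearMap ∘ₗ TensorProduct.map Δ α ∘ₗ Δ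
      = TensorProduct.map α Δ ∘ₗ Δ)
    (hcompat : ∀ x y : A, Δ (μ x y) = mulT2 μ (Δ x) (Δ y))
    (hcl : ∀ x : A, μ c x = α x) (hcr : ∀ x : A, μ x c = α x) :
    ((TensorProduct.assoc k A A A).symm (TensorProduct.map α Δ R)
        = mulT3 μ (R13e c R) (R12e c R)) ↔
    (∀ φ ψ : Module.Dual k A,
      lam2 α R (dualMul Δ φ ψ) = μ (lam2' α R ψ) (lam2' α R φ)) :=
  second_axiom_iff_lambda_two_general μ Δ α c R hcl hcr
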